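/- The formula (¬x ∨ a ∨ b) ∧ (¬x ∨ ¬a ∨ b) ∧ (¬x ∨ ¬b ∨ c) ∧ (¬x ∨ ¬b ∨ ¬c), with fresh variables a, b, c, is satisfiable when extended from a given assignment of x if and only if x = False — i.e., it is logically equivalent (after existentially quantifying a, b, c) to ¬x. Hence replacing an all-negative repeated clause (¬x ∨ ¬x ∨ ¬x) by this conjunction preserves satisfiability of the enclosing CNF formula. -/

import Mathlib

/-!
Each pair of clauses is a resolution on a fresh variable: `(¬x ∨ a ∨ b) ∧ (¬x ∨ ¬a ∨ b)` is
`¬x ∨ b`, and `(¬x ∨ ¬b ∨ c) ∧ (¬x ∨ ¬b ∨ ¬c)` is `¬x ∨ ¬b`; resolving these two on `b` leaves `¬x`.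
So the four clauses equal `¬x` for every value of `a, b, c`, and the fresh variables can be dropped.
-/

theorem Bool.or_and_or_not_self (p a : Bool) : ((p || a) && (p || !a)) = p := by
  cases a <;> simp

theorem Bool.or_or_and_or_not_or (p a q : Bool) : ((p || a || q) && (p || !a || q)) = (p || q) := by
  cases a <;> simp

theorem all_negative_gadget_eq (x a b c : Bool) :
    ((!x || a || b) && (!x || !a || b) && (!x || !b || c) && (!x || !b || !c)) = !x := by
  rw [Bool.or_or_and_or_not_or, Bool.and_assoc, Bool.or_and_or_not_self (!x || !b),
    Bool.or_and_or_not_self]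

/-- The formula `(¬x ∨ a ∨ b) ∧ (¬x ∨ ¬a ∨ b) ∧ (¬x ∨ ¬b ∨ c) ∧ (¬x ∨ ¬b ∨ ¬c)`
with fresh variables `a, b, c` is satisfiable extending a given value of `x` iff
`x = false`; hence replacing the clause `(¬x ∨ ¬x ∨ ¬x)` by this conjunction
preserves satisfiability of the enclosing CNF formula (whose remaining part is
represented by an arbitrary predicate `R` on the value of `x`, since `a, b, c`
occur nowhere else). -/
theorem all_negative_clause_replacement :
    (∀ x : Bool,
      (∃ a b c : Bool,
          ((!x || a || b) && (!x || !a || b) && (!x || !b || c) &&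
            (!x || !b || !c)) = true) ↔ x = false) ∧
    (∀ R : Bool → Prop,
      ((∃ x : Bool, R x ∧ (!x || !x || !x) = true) ↔
        (∃ (x a b c : Bool), R x ∧
          ((!x || a || b) && (!x || !a || b) && (!x || !b || c) &&
            (!x || !b || !c)) = true))) := by
  simp only [all_negative_gadget_eq, Bool.or_self, exists_const, Bool.not_eq_true', iff_self,
    implies_true, and_self]
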